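/- For a state ρ on M_n(ℂ) and a positive unital trace-preserving map Φ, the following are equivalent: (i) S(Φ(D_ρ)) = S(D_ρ); (ii) the decreasingly ordered eigenvalue vectors of D_ρ and Φ(D_ρ) coincide; (iii) Φ(D_ρ) = u D_ρ u* for some unitary u; (iv) Φ*(Φ(D_ρ)) = D_ρ. -/

import Mathlib

open Matrix BigOperators ComplexOrder

/-- Entropy function `η(t) = -t log t` (with `η(0)=0` since `Real.log 0 = 0`). -/
noncomputable def eta (t : ℝ) : ℝ := -(t * Real.log t)

/-- Von Neumann entropy of a matrix: sum of `η` over eigenvalues (0 if not Hermitian). -/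
noncomputable def vnEntropy {n : ℕ} (D : Matrix (Fin n) (Fin n) ℂ) : ℝ :=
  if h : D.IsHermitian then ∑ i, eta (h.eigenvalues i) else 0

/-- Positive, unital, trace-preserving linear map on `M_n(ℂ)`. -/
def IsPUTP {n : ℕ} (Φ : Matrix (Fin n) (Fin n) ℂ →ₗ[ℂ] Matrix (Fin n) (Fin n) ℂ) : Prop :=
  (∀ x, x.PosSemidef → (Φ x).PosSemidef) ∧ Φ 1 = 1 ∧ ∀ x, (Φ x).trace = x.trace

/-- A family of mutually orthogonal rank-one (trace-one) self-adjoint projections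
summing to the identity. -/
def IsSpectralFamily {n : ℕ} (e : Fin n → Matrix (Fin n) (Fin n) ℂ) : Prop :=
  (∀ i, (e i).IsHermitian) ∧ (∀ i j, e i * e j = if i = j then e i else 0) ∧
    (∑ i, e i = 1) ∧ (∀ i, (e i).trace = 1)

/-!
Let `Pᵢ` and `Qⱼ` be the rank-one eigenprojections of `Φ D` and `D`. The matrix
`Tᵢⱼ = tr (Pᵢ Φ(Qⱼ))` is doubly stochastic and sends the eigenvalues `λ` of `D` to those of
`Φ D`: `μ = T λ`. Concavity of `t ↦ -t log t` gives `S(D) ≤ S(Φ D)` for every positive unital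
trace-preserving `Φ`, with equality only if `Tᵢⱼ ≠ 0` forces `μᵢ = λⱼ`. Then the eigenvalue
multiplicities agree, so `D` and `Φ D` have the same spectrum and are unitarily conjugate, and
`Φ` maps each spectral projection of `D` onto the spectral projection of `Φ D` for the same
eigenvalue, which `Φ*` maps back; hence `Φ* (Φ D) = D`. Conversely `Φ*` is again positive, unital
and trace preserving, so `Φ* (Φ D) = D` gives `S(D) ≤ S(Φ D) ≤ S(D)`.
-/

open Finset

namespace Matrix

variable {m : Type*} [Fintype m]

theorem trace_vecMulVec_star_mul (v : m → ℂ) (M : Matrix m m ℂ) :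
    (vecMulVec v (star v) * M).trace = star v ⬝ᵥ (M *ᵥ v) := by
  rw [vecMulVec_mul, trace_vecMulVec, dotProduct_comm, dotProduct_mulVec]

variable [DecidableEq m]

section
open scoped MatrixOrder Matrix.Norms.L2Operator

theorem PosSemidef.exists_eq_conjTranspose_mul_self {A : Matrix m m ℂ} (hA : A.PosSemidef) :
    ∃ C : Matrix m m ℂ, A = Cᴴ * C :=
  CStarAlgebra.nonneg_iff_eq_star_mul_self.mp hA.nonneg

end

theorem PosSemidef.trace_mul_nonneg {A B : Matrix m m ℂ} (hA : A.PosSemidef)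
    (hB : B.PosSemidef) : 0 ≤ (A * B).trace := by
  obtain ⟨C, rfl⟩ := hA.exists_eq_conjTranspose_mul_self
  rw [Matrix.mul_assoc, trace_mul_comm, Matrix.mul_assoc, ← Matrix.mul_assoc]
  exact (hB.mul_mul_conjTranspose_same C).trace_nonneg

theorem PosSemidef.mul_eq_zero_of_trace_mul_eq_zero {A B : Matrix m m ℂ} (hA : A.PosSemidef)
    (hB : B.PosSemidef) (h : (A * B).trace = 0) : A * B = 0 := by
  obtain ⟨C, rfl⟩ := hA.exists_eq_conjTranspose_mul_self
  obtain ⟨E, rfl⟩ := hB.exists_eq_conjTranspose_mul_self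
  have hEC : E * Cᴴ = 0 := by
    rw [← trace_conjTranspose_mul_self_eq_zero_iff, ← h, conjTranspose_mul,
      conjTranspose_conjTranspose, show C * Eᴴ * (E * Cᴴ) = C * (Eᴴ * E) * Cᴴ by
        simp only [Matrix.mul_assoc], trace_mul_cycle]
  have hCE : C * Eᴴ = 0 := by simpa using congrArg (·ᴴ) hEC
  rw [Matrix.mul_assoc, ← Matrix.mul_assoc C, hCE, Matrix.zero_mul, Matrix.mul_zero]

theorem posSemidef_of_forall_dotProduct_mulVec_nonneg {A : Matrix m m ℂ}
    (h : ∀ x, 0 ≤ star x ⬝ᵥ (A *ᵥ x)) : A.PosSemidef := by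
  rw [← isPositive_toEuclideanLin_iff, LinearMap.isPositive_iff_complex]
  intro x
  have hx := h x.ofLp
  rw [EuclideanSpace.inner_eq_star_dotProduct, ofLp_toLpLin, toLin'_apply, dotProduct_star,
    dotProduct_comm]
  generalize star x.ofLp ⬝ᵥ A *ᵥ x.ofLp = z at hx ⊢
  obtain ⟨hre, him⟩ := Complex.nonneg_iff.mp hx
  exact ⟨Complex.ext (by simp) (by simp [← him]), by simpa using hre⟩

end Matrix

namespace Matrix.IsHermitian

open Unitary

variable {𝕜 m : Type*} [RCLike 𝕜] [Fintype m]

theorem posSemidef_of_isIdempotentElem {P : Matrix m m 𝕜} (hP : P.IsHermitian)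
    (h : IsIdempotentElem P) : P.PosSemidef := by
  rw [← h.eq]
  nth_rewrite 1 [← hP.eq]
  exact posSemidef_conjTranspose_mul_self P

variable [DecidableEq m] {A : Matrix m m 𝕜} (hA : A.IsHermitian)

noncomputable def eigenproj (i : m) : Matrix m m 𝕜 :=
  conjStarAlgAut 𝕜 _ hA.eigenvectorUnitary (single i i 1)

theorem eigenproj_mul_eigenproj (i j : m) :
    hA.eigenproj i * hA.eigenproj j = if i = j then hA.eigenproj i else 0 := by
  rw [eigenproj, eigenproj, ← map_mul]
  split_ifs with h
  · rw [h, single_mul_single_same, mul_one]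
  · rw [single_mul_single_of_ne (h := h), map_zero]

theorem isIdempotentElem_eigenproj (i : m) : IsIdempotentElem (hA.eigenproj i) :=
  (hA.eigenproj_mul_eigenproj i i).trans (if_pos rfl)

theorem sum_eigenproj : ∑ i, hA.eigenproj i = 1 := by
  simp only [eigenproj, ← map_sum, sum_single_one, map_one]

theorem isHermitian_eigenproj (i : m) : (hA.eigenproj i).IsHermitian := by
  rw [IsHermitian, ← star_eq_conjTranspose, eigenproj, ← map_star, star_eq_conjTranspose,
    conjTranspose_single, star_one]

theorem posSemidef_eigenproj (i : m) : (hA.eigenproj i).PosSemidef :=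
  (hA.isHermitian_eigenproj i).posSemidef_of_isIdempotentElem (hA.isIdempotentElem_eigenproj i)

theorem trace_eigenproj (i : m) : (hA.eigenproj i).trace = 1 := by
  rw [eigenproj, conjStarAlgAut_apply, trace_mul_cycle, coe_star_mul_self, one_mul,
    trace_single_eq_same]

theorem sum_eigenvalues_smul_eigenproj : ∑ i, (hA.eigenvalues i : 𝕜) • hA.eigenproj i = A := by
  conv_rhs => rw [hA.spectral_theorem, ← sum_single_eq_diagonal]
  simp only [eigenproj, ← map_smul, map_sum, smul_single, smul_eq_mul, mul_one,
    Function.comp_apply]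

theorem trace_eigenproj_mul (i : m) : (hA.eigenproj i * A).trace = hA.eigenvalues i := by
  nth_rewrite 2 [← hA.sum_eigenvalues_smul_eigenproj]
  simp [Finset.mul_sum, hA.eigenproj_mul_eigenproj, hA.trace_eigenproj,
    RCLike.real_smul_eq_coe_mul]

noncomputable def spectralProj (t : ℝ) : Matrix m m 𝕜 :=
  ∑ i with hA.eigenvalues i = t, hA.eigenproj i

theorem sum_smul_spectralProj :
    ∑ t ∈ univ.image hA.eigenvalues, (t : 𝕜) • hA.spectralProj t = A := by
  conv_rhs => rw [← hA.sum_eigenvalues_smul_eigenproj]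
  rw [← sum_fiberwise_of_maps_to fun i _ => mem_image_of_mem hA.eigenvalues (mem_univ i)]
  refine sum_congr rfl fun t _ => ?_
  rw [spectralProj, smul_sum]
  exact sum_congr rfl fun i hi => by rw [(mem_filter.mp hi).2]

end Matrix.IsHermitian

theorem Matrix.IsHermitian.isSpectralFamily_eigenproj {n : ℕ} {A : Matrix (Fin n) (Fin n) ℂ}
    (hA : A.IsHermitian) : IsSpectralFamily hA.eigenproj :=
  ⟨hA.isHermitian_eigenproj, hA.eigenproj_mul_eigenproj, hA.sum_eigenproj, hA.trace_eigenproj⟩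

namespace IsSpectralFamily

variable {n : ℕ} {e : Fin n → Matrix (Fin n) (Fin n) ℂ} (he : IsSpectralFamily e)
include he

theorem isHermitian_sum (s : Finset (Fin n)) : (∑ i ∈ s, e i).IsHermitian :=
  Finset.sum_induction _ _ (fun _ _ ha hb => ha.add hb) Matrix.isHermitian_zero fun i _ => he.1 i

theorem isIdempotentElem_sum (s : Finset (Fin n)) : IsIdempotentElem (∑ i ∈ s, e i) := by
  rw [IsIdempotentElem, Finset.sum_mul_sum]
  exact Finset.sum_congr rfl fun i hi => by simp [he.2.1, hi]

theorem trace_sum (s : Finset (Fin n)) : (∑ i ∈ s, e i).trace = #s := by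
  simp [Matrix.trace_sum, he.2.2.2]

end IsSpectralFamily

namespace Matrix.IsHermitian

section SpectralProj

variable {n : ℕ} {A : Matrix (Fin n) (Fin n) ℂ} (hA : A.IsHermitian)

theorem isHermitian_spectralProj (t : ℝ) : (hA.spectralProj t).IsHermitian :=
  hA.isSpectralFamily_eigenproj.isHermitian_sum _

theorem isIdempotentElem_spectralProj (t : ℝ) : IsIdempotentElem (hA.spectralProj t) :=
  hA.isSpectralFamily_eigenproj.isIdempotentElem_sum _

theorem trace_spectralProj (t : ℝ) :
    (hA.spectralProj t).trace = #{i | hA.eigenvalues i = t} :=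
  hA.isSpectralFamily_eigenproj.trace_sum _

end SpectralProj

open Unitary Polynomial

variable {𝕜 m : Type*} [RCLike 𝕜] [Fintype m] [DecidableEq m] {A B : Matrix m m 𝕜}
  (hA : A.IsHermitian) (hB : B.IsHermitian)
include hA hB

/- `eigenvalues` lists the spectrum in decreasing order, hence is determined by the
characteristic polynomial. -/
theorem eigenvalues_eq_of_map_eigenvalues_eq
    (h : univ.val.map hB.eigenvalues = univ.val.map hA.eigenvalues) :
    hB.eigenvalues = hA.eigenvalues := by
  rw [eigenvalues_eq_eigenvalues_iff, hA.charpoly_eq, hB.charpoly_eq, prod_eq_multiset_prod,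
    prod_eq_multiset_prod]
  have := congrArg (Multiset.map fun t : ℝ => X - C (t : 𝕜)) h
  simp only [Multiset.map_map] at this
  exact congrArg Multiset.prod this

theorem eigenvalues_eq_of_eq_conj {u : Matrix m m 𝕜} (hu : star u * u = 1)
    (h : B = u * A * star u) : hB.eigenvalues = hA.eigenvalues := by
  rw [eigenvalues_eq_eigenvalues_iff, h, charpoly_mul_comm, ← Matrix.mul_assoc, hu,
    Matrix.one_mul]

theorem exists_unitary_conj_of_eigenvalues_eq (h : hB.eigenvalues = hA.eigenvalues) :
    ∃ u : Matrix m m 𝕜, u * star u = 1 ∧ star u * u = 1 ∧ B = u * A * star u := by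
  let u : unitary (Matrix m m 𝕜) := hB.eigenvectorUnitary * star hA.eigenvectorUnitary
  refine ⟨u, coe_mul_star_self u, coe_star_mul_self u, ?_⟩
  rw [← conjStarAlgAut_apply (S := 𝕜), conjStarAlgAut_mul_apply,
    conjStarAlgAut_star_eigenvectorUnitary, ← h, ← spectral_theorem]

end Matrix.IsHermitian

section DoublyStochastic

open Real

variable {ι α : Type*} [Fintype ι] {B : Matrix ι ι ℝ}

section Entropy

variable [DecidableEq ι] {x : ι → ℝ}

theorem mulVec_negMulLog_le_negMulLog_mulVec (hB : B ∈ doublyStochastic ℝ ι) (hx : 0 ≤ x)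
    (i : ι) : (B *ᵥ fun j => negMulLog (x j)) i ≤ negMulLog ((B *ᵥ x) i) :=
  strictConcaveOn_negMulLog.concaveOn.le_map_sum (fun _ _ => nonneg_of_mem_doublyStochastic hB)
    (sum_row_of_mem_doublyStochastic hB i) (fun j _ => hx j)

theorem sum_negMulLog_le_sum_negMulLog_mulVec (hB : B ∈ doublyStochastic ℝ ι) (hx : 0 ≤ x) :
    ∑ j, negMulLog (x j) ≤ ∑ i, negMulLog ((B *ᵥ x) i) :=
  sum_mulVec_of_mem_doublyStochastic hB ▸ Finset.sum_le_sum fun i _ =>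
    mulVec_negMulLog_le_negMulLog_mulVec hB hx i

theorem mulVec_apply_eq_of_sum_negMulLog_mulVec_eq (hB : B ∈ doublyStochastic ℝ ι) (hx : 0 ≤ x)
    (heq : ∑ i, negMulLog ((B *ᵥ x) i) = ∑ j, negMulLog (x j)) {i j : ι} (hij : B i j ≠ 0) :
    (B *ᵥ x) i = x j := by
  have hrow : (B *ᵥ fun j => negMulLog (x j)) i = negMulLog ((B *ᵥ x) i) :=
    (Finset.sum_eq_sum_iff_of_le fun i _ => mulVec_negMulLog_le_negMulLog_mulVec hB hx i).mp
      ((sum_mulVec_of_mem_doublyStochastic hB).trans heq.symm) i (mem_univ i)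
  exact ((strictConcaveOn_negMulLog.map_sum_eq_iff'
    (fun _ _ => nonneg_of_mem_doublyStochastic hB) (sum_row_of_mem_doublyStochastic hB i)
    (fun j _ => hx j)).mp hrow.symm j (mem_univ j) hij).symm

end Entropy

variable [DecidableEq α] {f g : ι → α}

theorem sum_sum_filter_eq_card (hrow : ∀ i, ∑ j, B i j = 1)
    (hsupp : ∀ i j, B i j ≠ 0 → f i = g j) (t : α) :
    ∑ i with f i = t, ∑ j with g j = t, B i j = #{i | f i = t} := by
  rw [card_eq_sum_ones, Nat.cast_sum]
  refine sum_congr rfl fun i hi => ?_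
  rw [sum_filter_of_ne fun j _ hij => (hsupp i j hij) ▸ (mem_filter.mp hi).2, hrow,
    Nat.cast_one]

theorem card_filter_eq_of_mem_doublyStochastic [DecidableEq ι] (hB : B ∈ doublyStochastic ℝ ι)
    (hsupp : ∀ i j, B i j ≠ 0 → f i = g j) (t : α) : #{i | f i = t} = #{j | g j = t} := by
  have hrows := sum_sum_filter_eq_card (sum_row_of_mem_doublyStochastic hB) hsupp t
  have hcols := sum_sum_filter_eq_card (B := Bᵀ) (sum_col_of_mem_doublyStochastic hB)
    (fun j i hij => (hsupp i j hij).symm) t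
  simp only [transpose_apply] at hcols
  rw [sum_comm] at hcols
  exact_mod_cast hrows.symm.trans hcols

theorem map_univ_val_eq_of_card_filter_eq (h : ∀ t, #{i | f i = t} = #{j | g j = t}) :
    univ.val.map f = univ.val.map g := by
  ext t
  simpa [Multiset.count_map, eq_comm, card_def] using h t

end DoublyStochastic

theorem vnEntropy_eq_sum_negMulLog {n : ℕ} {A : Matrix (Fin n) (Fin n) ℂ} (hA : A.IsHermitian) :
    vnEntropy A = ∑ i, Real.negMulLog (hA.eigenvalues i) := by
  simp [vnEntropy, hA, eta, Real.negMulLog, neg_mul]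

noncomputable def transitionMatrix {n : ℕ}
    (Φ : Matrix (Fin n) (Fin n) ℂ →ₗ[ℂ] Matrix (Fin n) (Fin n) ℂ)
    {A B : Matrix (Fin n) (Fin n) ℂ} (hA : A.IsHermitian) (hB : B.IsHermitian) :
    Matrix (Fin n) (Fin n) ℝ :=
  of fun i j => (hB.eigenproj i * Φ (hA.eigenproj j)).trace.re

namespace IsPUTP

variable {n : ℕ} {Φ Ψ : Matrix (Fin n) (Fin n) ℂ →ₗ[ℂ] Matrix (Fin n) (Fin n) ℂ}

theorem of_trace_mul_adjoint (hΦ : IsPUTP Φ)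
    (hadj : ∀ x y, (y * Ψ x).trace = (Φ y * x).trace) : IsPUTP Ψ := by
  obtain ⟨hpos, hone, htr⟩ := hΦ
  refine ⟨fun x hx => posSemidef_of_forall_dotProduct_mulVec_nonneg fun v => ?_, ?_, fun x => ?_⟩
  · rw [← trace_vecMulVec_star_mul, hadj]
    exact (hpos _ (posSemidef_vecMulVec_self_star v)).trace_mul_nonneg hx
  · rw [ext_iff_trace_mul_left]
    intro y
    rw [hadj, Matrix.mul_one, Matrix.mul_one, htr]
  · rw [← Matrix.one_mul (Ψ x), hadj, hone, Matrix.one_mul]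

/- `tr ((1 - Q) Φ P) = 0` forces `Φ P = Q Φ P Q ≤ Q`, and the traces agree. -/
theorem apply_eq_of_trace_mul_eq (hΦ : IsPUTP Φ) {P Q : Matrix (Fin n) (Fin n) ℂ}
    (hP : P.IsHermitian) (hP2 : IsIdempotentElem P) (hQ : Q.IsHermitian)
    (hQ2 : IsIdempotentElem Q) (htr : Q.trace = P.trace) (h : (Q * Φ P).trace = P.trace) :
    Φ P = Q := by
  obtain ⟨hpos, hone, htrΦ⟩ := hΦ
  have hΦP := hpos P (hP.posSemidef_of_isIdempotentElem hP2)
  have hΦP' : (1 - Φ P).PosSemidef := by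
    simpa [hone] using hpos _ ((isHermitian_one.sub hP).posSemidef_of_isIdempotentElem hP2.one_sub)
  have hQ' := (isHermitian_one.sub hQ).posSemidef_of_isIdempotentElem hQ2.one_sub
  have hleft : Q * Φ P = Φ P := by
    have : (1 - Q) * Φ P = 0 := hQ'.mul_eq_zero_of_trace_mul_eq_zero hΦP (by
      rw [sub_mul, Matrix.one_mul, trace_sub, h, htrΦ, sub_self])
    rwa [sub_mul, Matrix.one_mul, sub_eq_zero, eq_comm] at this
  have hright : Φ P * Q = Φ P := by
    simpa [conjTranspose_mul, hQ.eq, hΦP.1.eq] using congrArg (·ᴴ) hleft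
  have hdiff : (Q - Φ P).PosSemidef := by
    have := hΦP'.mul_mul_conjTranspose_same Q
    rwa [hQ.eq, Matrix.mul_sub, Matrix.mul_one, Matrix.sub_mul, hQ2.eq, hleft, hright] at this
  rw [eq_comm, ← sub_eq_zero, ← hdiff.trace_eq_zero_iff, trace_sub, htrΦ, htr, sub_self]

section Transition

variable {A B : Matrix (Fin n) (Fin n) ℂ} (hΦ : IsPUTP Φ) (hA : A.IsHermitian)
  (hB : B.IsHermitian)
include hΦ

theorem ofReal_transitionMatrix (i j : Fin n) :
    (transitionMatrix Φ hA hB i j : ℂ) = (hB.eigenproj i * Φ (hA.eigenproj j)).trace := by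
  have := (hB.posSemidef_eigenproj i).trace_mul_nonneg (hΦ.1 _ (hA.posSemidef_eigenproj j))
  exact (Complex.eq_re_of_ofReal_le (r := 0) (by simpa using this)).symm

theorem transitionMatrix_mem_doublyStochastic :
    transitionMatrix Φ hA hB ∈ doublyStochastic ℝ (Fin n) := by
  refine mem_doublyStochastic_iff_sum.mpr ⟨fun i j => ?_, fun i => ?_, fun j => ?_⟩
  · exact Complex.nonneg_iff.mp ((hB.posSemidef_eigenproj i).trace_mul_nonneg
      (hΦ.1 _ (hA.posSemidef_eigenproj j))) |>.1
  · apply Complex.ofReal_injective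
    simp only [Complex.ofReal_sum, hΦ.ofReal_transitionMatrix, ← trace_sum, ← Finset.mul_sum,
      ← map_sum, hA.sum_eigenproj, hΦ.2.1, Matrix.mul_one, hB.trace_eigenproj,
      Complex.ofReal_one]
  · apply Complex.ofReal_injective
    simp only [Complex.ofReal_sum, hΦ.ofReal_transitionMatrix, ← trace_sum, ← Finset.sum_mul,
      hB.sum_eigenproj, Matrix.one_mul, hΦ.2.2, hA.trace_eigenproj, Complex.ofReal_one]

theorem eigenvalues_eq_transitionMatrix_mulVec (hB : (Φ A).IsHermitian) :
    hB.eigenvalues = transitionMatrix Φ hA hB *ᵥ hA.eigenvalues := by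
  ext i
  apply Complex.ofReal_injective
  have hμ := hB.trace_eigenproj_mul i
  rw [RCLike.ofReal_eq_complex_ofReal] at hμ
  rw [← hμ, congrArg (fun X => (hB.eigenproj i * Φ X).trace)
    hA.sum_eigenvalues_smul_eigenproj.symm]
  simp only [mulVec, dotProduct, Complex.ofReal_sum, Complex.ofReal_mul,
    hΦ.ofReal_transitionMatrix, map_sum, map_smul, Finset.mul_sum, mul_smul_comm, trace_sum,
    trace_smul, smul_eq_mul, mul_comm, RCLike.ofReal_eq_complex_ofReal]

theorem trace_spectralProj_mul_apply_spectralProj (s t : ℝ) :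
    (hB.spectralProj s * Φ (hA.spectralProj t)).trace =
      ∑ i with hB.eigenvalues i = s, ∑ j with hA.eigenvalues j = t,
        (transitionMatrix Φ hA hB i j : ℂ) := by
  rw [IsHermitian.spectralProj, IsHermitian.spectralProj, map_sum, Finset.sum_mul]
  simp only [Finset.mul_sum, trace_sum, hΦ.ofReal_transitionMatrix]

end Transition

variable {X : Matrix (Fin n) (Fin n) ℂ} (hΦ : IsPUTP Φ)
include hΦ

theorem vnEntropy_le_vnEntropy_apply (hX : X.PosSemidef) : vnEntropy X ≤ vnEntropy (Φ X) := by
  have hH := hΦ.1 X hX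
  rw [vnEntropy_eq_sum_negMulLog hX.1, vnEntropy_eq_sum_negMulLog hH.1,
    hΦ.eigenvalues_eq_transitionMatrix_mulVec hX.1 hH.1]
  exact sum_negMulLog_le_sum_negMulLog_mulVec (hΦ.transitionMatrix_mem_doublyStochastic _ _)
    hX.eigenvalues_nonneg

theorem vnEntropy_apply_eq_of_apply_apply_eq (hΨ : IsPUTP Ψ) (hX : X.PosSemidef)
    (h : Ψ (Φ X) = X) : vnEntropy (Φ X) = vnEntropy X :=
  le_antisymm (by simpa only [h] using hΨ.vnEntropy_le_vnEntropy_apply (hΦ.1 X hX))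
    (hΦ.vnEntropy_le_vnEntropy_apply hX)

variable (hX : X.PosSemidef) (hH : (Φ X).IsHermitian) (heq : vnEntropy (Φ X) = vnEntropy X)
include hX hH heq

theorem eigenvalues_eq_of_transitionMatrix_ne_zero {i j : Fin n}
    (hij : transitionMatrix Φ hX.1 hH i j ≠ 0) : hH.eigenvalues i = hX.1.eigenvalues j := by
  rw [vnEntropy_eq_sum_negMulLog hH, vnEntropy_eq_sum_negMulLog hX.1,
    hΦ.eigenvalues_eq_transitionMatrix_mulVec hX.1 hH] at heq
  rw [hΦ.eigenvalues_eq_transitionMatrix_mulVec hX.1 hH]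
  exact mulVec_apply_eq_of_sum_negMulLog_mulVec_eq
    (hΦ.transitionMatrix_mem_doublyStochastic _ _) hX.eigenvalues_nonneg heq hij

theorem eigenvalues_eq_of_vnEntropy_eq : hH.eigenvalues = hX.1.eigenvalues :=
  hX.1.eigenvalues_eq_of_map_eigenvalues_eq hH <| map_univ_val_eq_of_card_filter_eq <|
    card_filter_eq_of_mem_doublyStochastic (hΦ.transitionMatrix_mem_doublyStochastic hX.1 hH)
      fun _ _ => hΦ.eigenvalues_eq_of_transitionMatrix_ne_zero hX hH heq

theorem apply_apply_eq_of_vnEntropy_eq (hadj : ∀ x y, (y * Ψ x).trace = (Φ y * x).trace) :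
    Ψ (Φ X) = X := by
  have hμ := hΦ.eigenvalues_eq_of_vnEntropy_eq hX hH heq
  have htr (t : ℝ) : (hH.spectralProj t).trace = (hX.1.spectralProj t).trace := by
    rw [hH.trace_spectralProj, hX.1.trace_spectralProj, hμ]
  have hΦP (t : ℝ) : Φ (hX.1.spectralProj t) = hH.spectralProj t := by
    refine hΦ.apply_eq_of_trace_mul_eq (hX.1.isHermitian_spectralProj t)
      (hX.1.isIdempotentElem_spectralProj t) (hH.isHermitian_spectralProj t)
      (hH.isIdempotentElem_spectralProj t) (htr t) ?_
    rw [hΦ.trace_spectralProj_mul_apply_spectralProj, ← htr, hH.trace_spectralProj]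
    exact_mod_cast sum_sum_filter_eq_card
      (sum_row_of_mem_doublyStochastic (hΦ.transitionMatrix_mem_doublyStochastic hX.1 hH))
      (fun _ _ => hΦ.eigenvalues_eq_of_transitionMatrix_ne_zero hX hH heq) t
  have hΨQ (t : ℝ) : Ψ (hH.spectralProj t) = hX.1.spectralProj t :=
    (hΦ.of_trace_mul_adjoint hadj).apply_eq_of_trace_mul_eq (hH.isHermitian_spectralProj t)
      (hH.isIdempotentElem_spectralProj t) (hX.1.isHermitian_spectralProj t)
      (hX.1.isIdempotentElem_spectralProj t) (htr t).symm
      (by rw [hadj, hΦP, (hH.isIdempotentElem_spectralProj t).eq, htr])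
  calc Ψ (Φ X) = Ψ (∑ t ∈ univ.image hH.eigenvalues, (t : ℂ) • hH.spectralProj t) :=
        congrArg Ψ hH.sum_smul_spectralProj.symm
    _ = X := by
      simp only [map_sum, map_smul, hΨQ, hμ]
      exact hX.1.sum_smul_spectralProj

end IsPUTP

theorem stmt_8_general {n : ℕ} (Φ Ψ : Matrix (Fin n) (Fin n) ℂ →ₗ[ℂ] Matrix (Fin n) (Fin n) ℂ)
    (hΦ : IsPUTP Φ)
    (hadj : ∀ x y : Matrix (Fin n) (Fin n) ℂ, (y * Ψ x).trace = (Φ y * x).trace)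
    (D : Matrix (Fin n) (Fin n) ℂ) (hD : D.PosSemidef)
    (hH : (Φ D).IsHermitian) :
    List.TFAE
      [ vnEntropy (Φ D) = vnEntropy D,
        ∃ σ : Equiv.Perm (Fin n), ∀ i, hH.eigenvalues (σ i) = hD.1.eigenvalues i,
        ∃ u : Matrix (Fin n) (Fin n) ℂ,
          u * star u = 1 ∧ star u * u = 1 ∧ Φ D = u * D * star u,
        Ψ (Φ D) = D ] := by
  tfae_have 1 → 2 := fun h =>
    ⟨1, fun i => congrFun (hΦ.eigenvalues_eq_of_vnEntropy_eq hD hH h) i⟩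
  tfae_have 2 → 3 := by
    rintro ⟨σ, hσ⟩
    refine hD.1.exists_unitary_conj_of_eigenvalues_eq hH
      (hD.1.eigenvalues_eq_of_map_eigenvalues_eq hH ?_)
    conv_lhs => rw [← Multiset.map_univ_val_equiv σ, Multiset.map_map]
    exact congrArg (Multiset.map · _) (funext hσ)
  tfae_have 3 → 1 := by
    rintro ⟨u, -, hu, hΦD⟩
    rw [vnEntropy_eq_sum_negMulLog hH, vnEntropy_eq_sum_negMulLog hD.1,
      hD.1.eigenvalues_eq_of_eq_conj hH hu hΦD]
  tfae_have 1 → 4 := fun h => hΦ.apply_apply_eq_of_vnEntropy_eq hD hH h hadj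
  tfae_have 4 → 1 := hΦ.vnEntropy_apply_eq_of_apply_apply_eq (hΦ.of_trace_mul_adjoint hadj) hD
  tfae_finish

theorem stmt_8 {n : ℕ} (Φ Ψ : Matrix (Fin n) (Fin n) ℂ →ₗ[ℂ] Matrix (Fin n) (Fin n) ℂ)
    (hΦ : IsPUTP Φ)
    (hadj : ∀ x y : Matrix (Fin n) (Fin n) ℂ, (y * Ψ x).trace = (Φ y * x).trace)
    (D : Matrix (Fin n) (Fin n) ℂ) (hD : D.PosSemidef) (htr : D.trace = 1)
    (hH : (Φ D).IsHermitian) :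
    List.TFAE
      [ vnEntropy (Φ D) = vnEntropy D,
        ∃ σ : Equiv.Perm (Fin n), ∀ i, hH.eigenvalues (σ i) = hD.1.eigenvalues i,
        ∃ u : Matrix (Fin n) (Fin n) ℂ,
          u * star u = 1 ∧ star u * u = 1 ∧ Φ D = u * D * star u,
        Ψ (Φ D) = D ] :=
  stmt_8_general Φ Ψ hΦ hadj D hD hH
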